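/- The set 𝒞₁ — of posetted binary trees over the two-element chain b < a in which every local rightmost leaf is labelled a and exactly one leaf is labelled a — is precisely the set {Ω_m : m ≥ 0} of Bernoulli-type trees; moreover, for every m ≥ 0 the coefficient of Ω_m is b_{(Ω_m)} = b_m (for m ≥ 1, Ω_m has a single subroot v, namely its root, with d(v) = m and t(v) = 1; for m = 0 the coefficient is the empty product 1 = b₀). -/
import Mathlib


/-- A (planar) binary rooted tree with leaves labelled by elements of `A`.
`node l r` has left subtree `l` and right subtree `r`. -/
inductive LTree (A : Type) : Type
  | leaf (a : A) : LTree A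
  | node (l r : LTree A) : LTree A

namespace LTree

variable {A : Type}

/-- The list of leaf labels, from left to right. -/
def leafList : LTree A → List A
  | leaf a => [a]
  | node l r => leafList l ++ leafList r

/-- The number of leaves. -/
def numLeaves (t : LTree A) : ℕ := (leafList t).length

/-- The label of the rightmost leaf, i.e. of `m(root)`. -/
def rml : LTree A → A
  | leaf a => a
  | node _ r => rml r

/-- The length `d(v)` of the rightmost path from the root `v` to `m(v)`. -/
def rdepth : LTree A → ℕ
  | leaf _ => 0
  | node _ r => rdepth r + 1

/-- Monotonicity of the leaf labelling `f : (L(Γ), ⪯) → A`:  for every subroot `v`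
and every leaf `u → v` one has `f u ≤ f (m v)`.  (The subroots of `node l r` are the
root together with the subroots of `l` and the subroots of `r` other than the root of
`r`; the condition at the root of `r` is implied by the one at the root, since
`m(root) = m(root of r)`.) -/
def Mono [Preorder A] : LTree A → Prop
  | leaf _ => True
  | node l r => (∀ x ∈ leafList l ++ leafList r, x ≤ rml r) ∧ Mono l ∧ Mono r

mutual
  /-- The coefficient `b_{(Γ,f)} = ∏_{v ∈ R(Γ)} bn (d v) / t v` attached to a posetted
  tree, for a sequence `bn` of scalars. -/
  def coeff {K : Type} [Field K] [DecidableEq A] (bn : ℕ → K) : LTree A → K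
    | leaf _ => 1
    | node l r =>
        (bn (rdepth r + 1) / (((leafList l ++ leafList r).count (rml r) : ℕ) : K))
          * coeff bn l * coeffAux bn r
  /-- Product of `bn (d v) / t v` over the subroots of the tree other than its root. -/
  def coeffAux {K : Type} [Field K] [DecidableEq A] (bn : ℕ → K) : LTree A → K
    | leaf _ => 1
    | node l r => coeff bn l * coeffAux bn r
end

/-- The evaluation `Z_Γ(f)` of a leaf-labelled binary tree in a Lie algebra: take
the bracket at every internal vertex. -/
def evalT {L : Type} [LieRing L] (g : A → L) : LTree A → L
  | leaf a => g a
  | node l r => ⁅evalT g l, evalT g r⁆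

end LTree

/-- `bseq n = B_n / n!`, where `B_n` is the `n`-th Bernoulli number
(convention `B₁ = -1/2`). -/
noncomputable def bseq (n : ℕ) : ℚ := bernoulli n / n.factorial

section BCH

variable {L : Type} [LieRing L] [LieAlgebra ℚ L]

/-- `adn x n = ad(x)^n`. -/
def adn (x : L) (n : ℕ) : L → L := (fun y => ⁅x, y⁆)^[n]

/-- The summand `ad(a)^{p₁}ad(b)^{q₁}⋯ad(a)^{p_n}ad(b)^{q_n−1} b` of Dynkin's formula
(reading `⋯ad(a)^{p_n−1} a` when `q_n = 0`). -/
def dynkinWord (a b : L) : List (ℕ × ℕ) → L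
  | [] => 0
  | [(p, q)] => if q = 0 then adn a (p - 1) a else adn a p (adn b (q - 1) b)
  | (p, q) :: x :: l => adn a p (adn b q (dynkinWord a b (x :: l)))

/-- The coefficient `((-1)^{n-1}/n) ⬝ (1/(p₁!q₁!⋯p_n!q_n!))` of Dynkin's formula. -/
noncomputable def dynkinCoeff (pl : List (ℕ × ℕ)) : ℚ :=
  ((-1 : ℚ) ^ (pl.length - 1) / (pl.length : ℚ)) *
    ((pl.map fun pq => ((pq.1.factorial * pq.2.factorial : ℕ) : ℚ)).prod)⁻¹

/-- The Baker–Campbell–Hausdorff product, defined by Dynkin's formula; on a nilpotent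
Lie algebra all but finitely many summands vanish. -/
noncomputable def bch (a b : L) : L :=
  ∑ᶠ pl ∈ {pl : List (ℕ × ℕ) | pl ≠ [] ∧ ∀ pq ∈ pl, 0 < pq.1 + pq.2},
    dynkinCoeff pl • dynkinWord a b pl

end BCH

namespace LTree

/-- `AllRlm P t` holds iff every local rightmost leaf of `t` has its label satisfying
`P`.  (The local rightmost leaves of `node l r` are the rightmost leaf, of label
`rml r`, together with the local rightmost leaves of `l` and of `r`; a single leaf lies
on no nontrivial rightmost branch.) -/
def AllRlm {A : Type} (P : A → Prop) : LTree A → Prop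
  | leaf _ => True
  | node l r => P (rml r) ∧ AllRlm P l ∧ AllRlm P r

end LTree

/-- The Bernoulli-type tree `Ω_m`: the right comb with `m` leaves labelled `b` (= `0`)
and rightmost leaf labelled `a` (= `1`), over the two-element chain `b < a` (= `Fin 2`). -/
def Omega : ℕ → LTree (Fin 2)
  | 0 => .leaf 1
  | m + 1 => .node (.leaf 0) (Omega m)

lemma LTree.rml_mem_leafList {A : Type} (t : LTree A) : t.rml ∈ t.leafList := by
  induction t with
  | leaf a => simp [LTree.rml, LTree.leafList]
  | node l r ihl ihr => simp [LTree.rml, LTree.leafList, ihr]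

lemma Omega_rml (m : ℕ) : (Omega m).rml = 1 := by
  induction m with
  | zero => rfl
  | succ m ih => simpa [Omega, LTree.rml] using ih

lemma Omega_rdepth (m : ℕ) : (Omega m).rdepth = m := by
  induction m with
  | zero => rfl
  | succ m ih => simpa [Omega, LTree.rdepth] using ih

lemma Omega_leafList (m : ℕ) :
    (Omega m).leafList = List.replicate m (0 : Fin 2) ++ [1] := by
  induction m with
  | zero => rfl
  | succ m ih => simp [Omega, LTree.leafList, ih, List.replicate_succ]

lemma Omega_coeffAux (m : ℕ) : LTree.coeffAux bseq (Omega m) = 1 := by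
  induction m with
  | zero => rfl
  | succ m ih => rw [Omega, LTree.coeffAux, LTree.coeff, ih, mul_one]

lemma Omega_mem (m : ℕ) : LTree.Mono (Omega m) ∧
    LTree.AllRlm (· = (1 : Fin 2)) (Omega m) ∧
    ((Omega m).leafList).count (1 : Fin 2) = 1 := by
  induction m with
  | zero => refine ⟨trivial, trivial, ?_⟩; rfl
  | succ m ih =>
    obtain ⟨h1, h2, h3⟩ := ih
    refine ⟨⟨?_, trivial, h1⟩, ⟨Omega_rml m, trivial, h2⟩, ?_⟩
    · intro x _
      rw [Omega_rml]
      exact Fin.le_last x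
    · simpa [Omega, LTree.leafList] using h3

/-- **Theorem.** The set `𝒞₁` of posetted binary trees over the chain `b < a`
(= `Fin 2`, `0 = b`, `1 = a`) in which every local rightmost leaf is labelled `a` and
exactly one leaf is labelled `a` is precisely `{Ω_m : m ≥ 0}`; moreover
`b_{(Ω_m)} = b_m` for every `m ≥ 0`. -/
theorem C1_eq_range_Omega_and_coeff_Omega :
    {t : LTree (Fin 2) | LTree.Mono t ∧ LTree.AllRlm (· = (1 : Fin 2)) t ∧
        (LTree.leafList t).count (1 : Fin 2) = 1} = Set.range Omega ∧
    ∀ m : ℕ, LTree.coeff bseq (Omega m) = bseq m := by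
  constructor
  · ext t
    simp only [Set.mem_setOf_eq, Set.mem_range]
    constructor
    · rintro ⟨hm, hr, hc⟩
      induction t with
      | leaf a =>
        have : a = 1 := by
          by_contra h
          simp [LTree.leafList, List.count_cons, h] at hc
        exact ⟨0, by simp [Omega, this]⟩
      | node l r ihl ihr =>
        obtain ⟨hrml, hrl, hrr⟩ := hr
        obtain ⟨_, hml, hmr⟩ := hm
        have hmem : (1 : Fin 2) ∈ r.leafList := by
          rw [← hrml]; exact LTree.rml_mem_leafList r
        have hrcount : r.leafList.count (1 : Fin 2) ≥ 1 :=
          List.count_pos_iff.mpr hmem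
        rw [LTree.leafList, List.count_append] at hc
        have hl0 : l.leafList.count (1 : Fin 2) = 0 := by omega
        have hr1 : r.leafList.count (1 : Fin 2) = 1 := by omega
        obtain ⟨m, hm'⟩ := ihr hmr hrr hr1
        -- l must be a leaf labelled 0
        cases l with
        | leaf a =>
          have ha : a = 0 := by
            have : a ≠ 1 := by
              intro h; simp [LTree.leafList, h] at hl0
            omega
          exact ⟨m + 1, by simp [Omega, ha, hm']⟩
        | node l1 r1 =>
          exfalso
          have : (1 : Fin 2) ∈ (LTree.node l1 r1).leafList := by
            rw [← hrl.1]; exact LTree.rml_mem_leafList _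
          have := List.count_pos_iff.mpr this
          omega
    · rintro ⟨m, rfl⟩
      exact Omega_mem m
  · intro m
    cases m with
    | zero => simp [Omega, LTree.coeff, bseq]
    | succ m =>
      rw [Omega, LTree.coeff, Omega_coeffAux, Omega_rdepth]
      have : ((LTree.leaf (0 : Fin 2)).leafList ++ (Omega m).leafList).count
          ((Omega m).rml) = 1 := by
        rw [Omega_rml, List.count_append]
        have := (Omega_mem m).2.2
        simp [LTree.leafList, this]
      rw [Omega_rml] at this ⊢
      rw [this]
      norm_num [LTree.coeff]
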